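/- arXiv:2603.14280 — 3 statements merged into one kernel-verified Lean document; each statement's English description precedes it below -/
import Mathlib

section
/- Let e_0, e_1, ..., e_d be a sequence of positive real numbers satisfying the log-convexity conditions e_{i+1}/e_i ≥ e_i/e_{i-1} for all 1 ≤ i ≤ d-1, with e_0 = A and e_d = B. Then the Minkowski-type inequality holds: (∑_{i=0}^d C(d,i) e_i)^{1/d} ≤ A^{1/d} + B^{1/d}, where C(d,i) denotes the binomial coefficient. -/
open Finset

/-!
Log-convexity says that the increments `log e (j + 1) - log e j` are nondecreasing, so `log e`
lies below its chord: `e i ^ d ≤ A ^ (d - i) * B ^ i`. With `a = A ^ (1/d)` and `b = B ^ (1/d)`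
each term of the sum is therefore at most `C(d, i) * a ^ (d - i) * b ^ i`, and the binomial
theorem bounds the sum by `(a + b) ^ d`.
-/

theorem mul_sum_range_le_of_monotoneOn {K : Type*} [Field K] [LinearOrder K]
    [IsStrictOrderedRing K]
    {x : ℕ → K} {d i : ℕ} (hx : MonotoneOn x (Set.Iio d)) (hi : i ≤ d) :
    d * ∑ j ∈ range i, x j ≤ i * ∑ j ∈ range d, x j := by
  obtain rfl | hi₀ := Nat.eq_zero_or_pos i
  · simp
  -- both the first `i` terms and the last `d - i` terms are separated by `x (i - 1)`
  have head : ∑ j ∈ range i, x j ≤ i * x (i - 1) := by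
    simpa using sum_le_card_nsmul (range i) x (x (i - 1)) fun j hj => by
      rw [mem_range] at hj
      exact hx (by simp; omega) (by simp; omega) (by omega)
  have tail : (d - i : ℕ) * x (i - 1) ≤ ∑ j ∈ Ico i d, x j := by
    simpa using card_nsmul_le_sum (Ico i d) x (x (i - 1)) fun j hj => by
      rw [mem_Ico] at hj
      exact hx (by simp; omega) (by simpa using hj.2) (by omega)
  rw [Nat.cast_sub hi] at tail
  rw [← sum_range_add_sum_Ico x hi]
  have hi' : (i : K) ≤ d := by exact_mod_cast hi
  nlinarith [mul_le_mul_of_nonneg_left head (sub_nonneg.2 hi'),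
    mul_le_mul_of_nonneg_left tail (Nat.cast_nonneg (α := K) i)]

theorem monotoneOn_log_succ_sub_log_of_log_convex {d : ℕ} {e : ℕ → ℝ}
    (hpos : ∀ i ≤ d, 0 < e i)
    (hlc : ∀ i, 1 ≤ i → i ≤ d - 1 → e i / e (i - 1) ≤ e (i + 1) / e i) :
    MonotoneOn (fun j => Real.log (e (j + 1)) - Real.log (e j)) (Set.Iio d) := by
  refine monotoneOn_of_le_succ Set.ordConnected_Iio fun j _ hj hj' => ?_
  simp only [Order.succ_eq_add_one, Set.mem_Iio] at hj hj' ⊢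
  have h := hlc (j + 1) (by omega) (by omega)
  rw [Nat.add_sub_cancel] at h
  have := Real.log_le_log (div_pos (hpos _ (by omega)) (hpos _ (by omega))) h
  rwa [Real.log_div (hpos _ (by omega)).ne' (hpos _ (by omega)).ne',
    Real.log_div (hpos _ (by omega)).ne' (hpos _ (by omega)).ne'] at this

theorem pow_le_pow_mul_pow_of_log_convex {d i : ℕ} {e : ℕ → ℝ} (hpos : ∀ i ≤ d, 0 < e i)
    (hlc : ∀ i, 1 ≤ i → i ≤ d - 1 → e i / e (i - 1) ≤ e (i + 1) / e i) (hi : i ≤ d) :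
    e i ^ d ≤ e 0 ^ (d - i) * e d ^ i := by
  have h :=
    mul_sum_range_le_of_monotoneOn (monotoneOn_log_succ_sub_log_of_log_convex hpos hlc) hi
  simp only [sum_range_sub (fun j => Real.log (e j))] at h
  have he₀ := hpos 0 (Nat.zero_le d)
  have he_d := hpos d le_rfl
  have he_i := hpos i hi
  rw [← Real.log_le_log_iff (by positivity) (by positivity),
    Real.log_mul (by positivity) (by positivity), Real.log_pow, Real.log_pow, Real.log_pow,
    Nat.cast_sub hi]
  linarith

/-- If a sequence of positive reals `e 0 = A, …, e d = B` satisfies the log-convexity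
conditions `e (i+1) / e i ≥ e i / e (i-1)` for `1 ≤ i ≤ d-1`, then the Minkowski-type
inequality `(∑ i, C(d,i) · e i)^(1/d) ≤ A^(1/d) + B^(1/d)` holds. -/
theorem minkowski_type_inequality_of_log_convex
    (d : ℕ) (hd : 1 ≤ d) (e : ℕ → ℝ) (A B : ℝ)
    (hpos : ∀ i ≤ d, 0 < e i) (h0 : e 0 = A) (hdB : e d = B)
    (hlc : ∀ i, 1 ≤ i → i ≤ d - 1 → e i / e (i - 1) ≤ e (i + 1) / e i) :
    (∑ i ∈ Finset.range (d + 1), (d.choose i : ℝ) * e i) ^ ((1 : ℝ) / d)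
      ≤ A ^ ((1 : ℝ) / d) + B ^ ((1 : ℝ) / d) := by
  have hd₀ : d ≠ 0 := by omega
  have hA : 0 ≤ A := h0 ▸ (hpos 0 (Nat.zero_le d)).le
  have hB : 0 ≤ B := hdB ▸ (hpos d le_rfl).le
  rw [one_div]
  set a := A ^ ((d : ℝ)⁻¹)
  set b := B ^ ((d : ℝ)⁻¹)
  have interpolate (i : ℕ) (hi : i ≤ d) : e i ≤ b ^ i * a ^ (d - i) := by
    refine le_of_pow_le_pow_left₀ hd₀ (by positivity) ?_
    rw [mul_pow, pow_right_comm b, pow_right_comm a, Real.rpow_inv_natCast_pow hA hd₀,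
      Real.rpow_inv_natCast_pow hB hd₀, ← h0, ← hdB, mul_comm]
    exact pow_le_pow_mul_pow_of_log_convex hpos hlc hi
  have hsum : ∑ i ∈ range (d + 1), (d.choose i : ℝ) * e i ≤ (a + b) ^ d := by
    rw [add_comm a b, add_pow]
    refine sum_le_sum fun i hi => ?_
    rw [mul_comm]
    exact mul_le_mul_of_nonneg_right (interpolate i (mem_range_succ_iff.1 hi))
      (by positivity)
  refine (Real.rpow_inv_le_iff_of_pos (sum_nonneg fun i hi => ?_) (by positivity)
    (by positivity)).2 (by rwa [Real.rpow_natCast])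
  have := hpos i (mem_range_succ_iff.1 hi)
  positivity
end

section
/- In the semigroup of Newton polygons under Minkowski sum, the Teissier product ⋆ (extended by distributivity from elementary polygons) distributes over the Minkowski sum: P ⋆ (Q + R) = P ⋆ Q + P ⋆ R for elementary Newton polygons P, Q, R, where + is Minkowski sum of the corresponding plane convex regions. Formally, working with formal ℕ-linear combinations of elementary polygons modulo the relations identifying combinations with the same associated convex polygon, ⋆ is well defined and distributive. -/
/-! For `a, b ≥ 0` the support function `supportFn s a b = ∑_{(ℓ, h) ∈ s} min (a ℓ) (b h)` is the
minimum of `a x + b y` over the region of `s`. Regions of nonempty combinations are closed,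
convex and stable under adding the first quadrant, so by Hahn–Banach separation the support
function on the quadrant also determines the region. The support function of `s ⋆ t` at `(a, b)`
is the sum over `(m, k) ∈ t` of the support function of `s` at `(min (a m) (b k), b m)`, hence it
depends only on the region of `s`. -/

open Pointwise

/-- The region of the plane associated to the elementary Newton polygon `{ℓ choose h}`
(encoded as the pair `(ℓ, h)`): the points of the first quadrant lying on or above
the line through `(ℓ, 0)` and `(0, h)`. -/
def elemRegion (P : ℕ × ℕ) : Set (ℝ × ℝ) :=
  {p | 0 ≤ p.1 ∧ 0 ≤ p.2 ∧ (P.2 : ℝ) * p.1 + (P.1 : ℝ) * p.2 ≥ (P.1 : ℝ) * (P.2 : ℝ)}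

/-- The region (Newton polygon) associated to a formal ℕ-linear combination of
elementary Newton polygons, i.e. a multiset of them: the Minkowski sum of their
regions. -/
def regionOf (s : Multiset (ℕ × ℕ)) : Set (ℝ × ℝ) :=
  (s.map elemRegion).sum

/-- Teissier's product extended to formal combinations of elementary Newton polygons,
given by the rule `{ℓ₁ choose h₁} ⋆ {ℓ₂ choose h₂} = {ℓ₁ℓ₂ choose min(ℓ₁h₂, ℓ₂h₁)}`
on pairs, extended bilinearly. -/
def starMul (s t : Multiset (ℕ × ℕ)) : Multiset (ℕ × ℕ) :=
  s.bind fun p => t.map fun q => (p.1 * q.1, min (p.1 * q.2) (q.1 * p.2))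

open Set

lemma Ici_zero_add_Ici_zero {α : Type*} [AddZeroClass α] [Preorder α] [AddLeftMono α]
    [AddRightMono α] : Ici (0 : α) + Ici 0 = Ici 0 :=
  (Ici_add_Ici_subset 0 0).trans_eq (by rw [add_zero]) |>.antisymm
    (subset_add_left _ (mem_Ici.2 le_rfl))

lemma nonneg_of_forall_lt_add_mul {c d α : ℝ} (h : ∀ r : ℝ, 0 ≤ r → c < d + r * α) :
    0 ≤ α := by
  by_contra! hα
  have h₀ := h 0 le_rfl
  have := h ((d - c) / -α) (div_nonneg (by linarith) (by linarith))
  rw [div_mul_eq_mul_div, div_neg, mul_div_assoc, div_self hα.ne, mul_one] at this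
  linarith

lemma regionOf_zero : regionOf 0 = 0 := by simp [regionOf]

lemma regionOf_cons (p : ℕ × ℕ) (s : Multiset (ℕ × ℕ)) :
    regionOf (p ::ₘ s) = elemRegion p + regionOf s := by
  simp [regionOf]

lemma elemRegion_eq_segment_add_Ici (p : ℕ × ℕ) :
    elemRegion p = segment ℝ ((p.1 : ℝ), 0) (0, (p.2 : ℝ)) + Ici 0 := by
  have hℓ₀ : (0 : ℝ) ≤ p.1 := Nat.cast_nonneg _
  have hh₀ : (0 : ℝ) ≤ p.2 := Nat.cast_nonneg _
  ext ⟨x, y⟩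
  constructor
  · rintro ⟨hx, hy, hxy⟩
    rcases le_or_gt (p.1 : ℝ) x with hℓx | hxℓ
    · exact ⟨((p.1 : ℝ), 0), left_mem_segment _ _ _, (x - p.1, y),
        Prod.mk_le_mk.2 ⟨by simpa using hℓx, hy⟩, by simp⟩
    · have hℓ : (0 : ℝ) < p.1 := hx.trans_lt hxℓ
      have hy' : p.2 * (1 - x / p.1) ≤ y := by
        rw [mul_one_sub, mul_div_assoc', sub_le_iff_le_add, ← sub_le_iff_le_add',
          le_div_iff₀ hℓ]
        dsimp only at hxy
        linarith
      refine ⟨(x, p.2 * (1 - x / p.1)),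
        ⟨x / p.1, 1 - x / p.1, by positivity, ?_, by ring, ?_⟩,
        (0, y - p.2 * (1 - x / p.1)), Prod.mk_le_mk.2 ⟨le_rfl, by simpa using hy'⟩, by simp⟩
      · rw [sub_nonneg, div_le_one hℓ]; exact hxℓ.le
      · ext
        · simp [div_mul_cancel₀ _ hℓ.ne']
        · simp [mul_comm]
  · rintro ⟨_, ⟨θ₁, θ₂, hθ₁, hθ₂, hθ, rfl⟩, v, hv, hsum⟩
    obtain ⟨hv₁, hv₂⟩ := Prod.mk_le_mk.1 hv
    obtain ⟨rfl, rfl⟩ := Prod.ext_iff.1 hsum.symm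
    simp only [Prod.fst_add, Prod.snd_add, Prod.smul_fst, Prod.smul_snd, smul_eq_mul,
      mul_zero, add_zero, zero_add] at hv₁ hv₂ ⊢
    refine ⟨by positivity, by positivity, ?_⟩
    obtain rfl : θ₂ = 1 - θ₁ := by linarith
    dsimp only
    nlinarith [mul_nonneg hh₀ hv₁, mul_nonneg hℓ₀ hv₂]

def edgeSum (s : Multiset (ℕ × ℕ)) : Set (ℝ × ℝ) :=
  (s.map fun p => segment ℝ ((p.1 : ℝ), 0) (0, (p.2 : ℝ))).sum

lemma edgeSum_cons (p : ℕ × ℕ) (s : Multiset (ℕ × ℕ)) :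
    edgeSum (p ::ₘ s) = segment ℝ ((p.1 : ℝ), 0) (0, (p.2 : ℝ)) + edgeSum s := by
  simp [edgeSum]

lemma regionOf_cons_eq_edgeSum_add_Ici (p : ℕ × ℕ) (s : Multiset (ℕ × ℕ)) :
    regionOf (p ::ₘ s) = edgeSum (p ::ₘ s) + Ici 0 := by
  induction s using Multiset.induction generalizing p with
  | empty =>
    simp only [regionOf, edgeSum, Multiset.map_cons, Multiset.map_zero, Multiset.sum_cons,
      Multiset.sum_zero, add_zero, elemRegion_eq_segment_add_Ici]
  | cons q s ih =>
    rw [regionOf_cons, ih, elemRegion_eq_segment_add_Ici, add_add_add_comm,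
      Ici_zero_add_Ici_zero, edgeSum_cons p]

lemma isCompact_edgeSum (s : Multiset (ℕ × ℕ)) : IsCompact (edgeSum s) := by
  induction s using Multiset.induction with
  | empty => simp [edgeSum]
  | cons p s ih =>
    rw [edgeSum_cons]
    refine IsCompact.add ?_ ih
    rw [← convexHull_pair (𝕜 := ℝ)]
    exact (toFinite _).isCompact_convexHull ℝ

lemma isClosed_regionOf (s : Multiset (ℕ × ℕ)) : IsClosed (regionOf s) := by
  rcases Multiset.empty_or_exists_mem s with rfl | ⟨p, hp⟩
  · simp [regionOf_zero]
  · obtain ⟨s, rfl⟩ := Multiset.exists_cons_of_mem hp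
    rw [regionOf_cons_eq_edgeSum_add_Ici]
    exact isClosed_Ici.add_left_of_isCompact (isCompact_edgeSum _)

lemma convex_regionOf (s : Multiset (ℕ × ℕ)) : Convex ℝ (regionOf s) := by
  induction s using Multiset.induction with
  | empty => simp [regionOf_zero, convex_zero]
  | cons p s ih =>
    rw [regionOf_cons, elemRegion_eq_segment_add_Ici]
    exact ((convex_segment _ _).add (convex_Ici 0)).add ih

lemma add_mem_regionOf {s : Multiset (ℕ × ℕ)} (hs : s ≠ 0) {z v : ℝ × ℝ}
    (hz : z ∈ regionOf s) (hv : 0 ≤ v) : z + v ∈ regionOf s := by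
  obtain ⟨p, hp⟩ := Multiset.exists_mem_of_ne_zero hs
  obtain ⟨s, rfl⟩ := Multiset.exists_cons_of_mem hp
  rw [regionOf_cons_eq_edgeSum_add_Ici] at hz ⊢
  obtain ⟨k, hk, w, hw, rfl⟩ := hz
  exact ⟨k, hk, w + v, add_nonneg hw hv, (add_assoc k w v).symm⟩

noncomputable def supportFn (s : Multiset (ℕ × ℕ)) (a b : ℝ) : ℝ :=
  (s.map fun p => min (a * p.1) (b * p.2)).sum

lemma supportFn_cons (p : ℕ × ℕ) (s : Multiset (ℕ × ℕ)) (a b : ℝ) :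
    supportFn (p ::ₘ s) a b = min (a * p.1) (b * p.2) + supportFn s a b := by
  simp [supportFn]

lemma min_le_of_mem_elemRegion {p : ℕ × ℕ} {z : ℝ × ℝ} (hz : z ∈ elemRegion p) {a b : ℝ}
    (ha : 0 ≤ a) (hb : 0 ≤ b) : min (a * p.1) (b * p.2) ≤ a * z.1 + b * z.2 := by
  rw [elemRegion_eq_segment_add_Ici] at hz
  obtain ⟨_, ⟨θ₁, θ₂, hθ₁, hθ₂, hθ, rfl⟩, v, hv, rfl⟩ := hz
  obtain ⟨hv₁, hv₂⟩ := Prod.mk_le_mk.1 hv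
  simp only [Prod.fst_add, Prod.snd_add, Prod.smul_fst, Prod.smul_snd, smul_eq_mul,
    mul_zero, add_zero, zero_add] at hv₁ hv₂ ⊢
  obtain rfl : θ₂ = 1 - θ₁ := by linarith
  nlinarith [mul_le_mul_of_nonneg_left (min_le_left (a * p.1) (b * p.2)) hθ₁,
    mul_le_mul_of_nonneg_left (min_le_right (a * p.1) (b * p.2)) hθ₂,
    mul_nonneg ha hv₁, mul_nonneg hb hv₂]

lemma supportFn_le_of_mem_regionOf {s : Multiset (ℕ × ℕ)} {z : ℝ × ℝ} (hz : z ∈ regionOf s)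
    {a b : ℝ} (ha : 0 ≤ a) (hb : 0 ≤ b) : supportFn s a b ≤ a * z.1 + b * z.2 := by
  induction s using Multiset.induction generalizing z with
  | empty =>
    rw [regionOf_zero, mem_zero] at hz
    simp [hz, supportFn]
  | cons p s ih =>
    rw [regionOf_cons] at hz
    obtain ⟨u, hu, w, hw, rfl⟩ := hz
    rw [supportFn_cons, Prod.fst_add, Prod.snd_add]
    linarith [min_le_of_mem_elemRegion hu ha hb, ih hw]

lemma exists_mem_regionOf_supportFn_eq (s : Multiset (ℕ × ℕ)) (a b : ℝ) :
    ∃ z ∈ regionOf s, a * z.1 + b * z.2 = supportFn s a b := by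
  induction s using Multiset.induction with
  | empty => exact ⟨0, by simp [regionOf_zero], by simp [supportFn]⟩
  | cons p s ih =>
    obtain ⟨z, hz, hz_eq⟩ := ih
    have hv : ∃ v ∈ elemRegion p, a * v.1 + b * v.2 = min (a * p.1) (b * p.2) := by
      rw [elemRegion_eq_segment_add_Ici]
      rcases le_total (a * p.1) (b * p.2) with h | h
      · exact ⟨_, add_mem_add (left_mem_segment _ _ _) (mem_Ici.2 le_rfl),
          by simp [min_eq_left h]⟩
      · exact ⟨_, add_mem_add (right_mem_segment _ _ _) (mem_Ici.2 le_rfl),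
          by simp [min_eq_right h]⟩
    obtain ⟨v, hv, hv_eq⟩ := hv
    refine ⟨v + z, regionOf_cons p s ▸ add_mem_add hv hz, ?_⟩
    rw [supportFn_cons, Prod.fst_add, Prod.snd_add]
    linarith

lemma supportFn_eq_of_regionOf_eq {s s' : Multiset (ℕ × ℕ)} (h : regionOf s = regionOf s')
    {a b : ℝ} (ha : 0 ≤ a) (hb : 0 ≤ b) : supportFn s a b = supportFn s' a b := by
  obtain ⟨z, hz, hz_eq⟩ := exists_mem_regionOf_supportFn_eq s a b
  obtain ⟨z', hz', hz'_eq⟩ := exists_mem_regionOf_supportFn_eq s' a b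
  refine le_antisymm ?_ ?_
  · exact hz'_eq ▸ supportFn_le_of_mem_regionOf (h ▸ hz') ha hb
  · exact hz_eq ▸ supportFn_le_of_mem_regionOf (h ▸ hz) ha hb

lemma mem_regionOf_of_supportFn_le {s : Multiset (ℕ × ℕ)} (hs : s ≠ 0) {z : ℝ × ℝ}
    (hz : ∀ a b : ℝ, 0 ≤ a → 0 ≤ b → supportFn s a b ≤ a * z.1 + b * z.2) :
    z ∈ regionOf s := by
  by_contra hz_not
  obtain ⟨f, u, hfz, hf⟩ :=
    geometric_hahn_banach_point_closed (convex_regionOf s) (isClosed_regionOf s) hz_not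
  have hf_apply : ∀ w : ℝ × ℝ, f w = f (1, 0) * w.1 + f (0, 1) * w.2 := by
    intro w
    conv_lhs => rw [show w = w.1 • ((1 : ℝ), (0 : ℝ)) + w.2 • ((0 : ℝ), (1 : ℝ)) by ext <;> simp]
    rw [map_add, map_smul, map_smul, smul_eq_mul, smul_eq_mul, mul_comm, mul_comm w.2]
  obtain ⟨w, hw, -⟩ := exists_mem_regionOf_supportFn_eq s 0 0
  have hnonneg : ∀ e : ℝ × ℝ, 0 ≤ e → 0 ≤ f e := fun e he =>
    nonneg_of_forall_lt_add_mul fun r hr => by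
      simpa [map_add, map_smul] using hf _ (add_mem_regionOf hs hw (smul_nonneg hr he))
  obtain ⟨y, hy, hy_eq⟩ := exists_mem_regionOf_supportFn_eq s (f (1, 0)) (f (0, 1))
  have := hz _ _ (hnonneg (1, 0) (by simp [Prod.le_def]))
    (hnonneg (0, 1) (by simp [Prod.le_def]))
  have := hf y hy
  rw [hf_apply] at hfz this
  linarith

lemma regionOf_eq_of_supportFn_eq {s s' : Multiset (ℕ × ℕ)} (hs : s ≠ 0) (hs' : s' ≠ 0)
    (h : ∀ a b : ℝ, 0 ≤ a → 0 ≤ b → supportFn s a b = supportFn s' a b) :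
    regionOf s = regionOf s' := by
  ext z
  refine ⟨fun hz => mem_regionOf_of_supportFn_le hs' fun a b ha hb => ?_,
    fun hz => mem_regionOf_of_supportFn_le hs fun a b ha hb => ?_⟩
  · exact h a b ha hb ▸ supportFn_le_of_mem_regionOf hz ha hb
  · exact (h a b ha hb).symm ▸ supportFn_le_of_mem_regionOf hz ha hb

lemma regionOf_eq_zero_iff {s : Multiset (ℕ × ℕ)} : regionOf s = 0 ↔ s = 0 := by
  refine ⟨fun h => ?_, fun h => h ▸ regionOf_zero⟩
  by_contra hs
  obtain ⟨z, hz, -⟩ := exists_mem_regionOf_supportFn_eq s 0 0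
  have hz' := add_mem_regionOf hs hz (show (0 : ℝ × ℝ) ≤ (1, 0) by simp [Prod.le_def])
  rw [h, mem_zero] at hz hz'
  simp [hz] at hz'

lemma starMul_ne_zero {s t : Multiset (ℕ × ℕ)} (hs : s ≠ 0) (ht : t ≠ 0) : starMul s t ≠ 0 := by
  rw [Ne, ← Multiset.card_eq_zero]
  simp [starMul, Multiset.card_bind, hs, ht]

lemma starMul_add_right (s t u : Multiset (ℕ × ℕ)) :
    starMul s (t + u) = starMul s t + starMul s u := by
  simp only [starMul, Multiset.map_add, Multiset.bind_add]

lemma supportFn_starMul (s t : Multiset (ℕ × ℕ)) {a b : ℝ} (hb : 0 ≤ b) :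
    supportFn (starMul s t) a b =
      (t.map fun q => supportFn s (min (a * q.1) (b * q.2)) (b * q.1)).sum := by
  simp only [supportFn, starMul, Multiset.map_bind, Multiset.sum_bind, Multiset.map_map,
    Function.comp_def]
  rw [Multiset.sum_map_sum_map]
  refine congrArg Multiset.sum (Multiset.map_congr rfl fun q _ =>
    congrArg Multiset.sum (Multiset.map_congr rfl fun p _ => ?_))
  push_cast
  rw [mul_min_of_nonneg _ _ hb, ← min_assoc, min_mul_of_nonneg _ _ (Nat.cast_nonneg _)]
  ring_nf

/-- On formal ℕ-linear combinations of elementary Newton polygons (with `ℓ ≥ 1`),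
considered modulo the identification of combinations having the same associated
convex region under Minkowski sum, the Teissier product `⋆` is well defined, and it
distributes over the Minkowski sum: `P ⋆ (Q + R) = P ⋆ Q + P ⋆ R`. -/
theorem starMul_well_defined_and_distrib :
    (∀ s s' t : Multiset (ℕ × ℕ),
      (∀ p ∈ s, 1 ≤ p.1) → (∀ p ∈ s', 1 ≤ p.1) → (∀ p ∈ t, 1 ≤ p.1) →
      regionOf s = regionOf s' → regionOf (starMul s t) = regionOf (starMul s' t)) ∧
    (∀ s t u : Multiset (ℕ × ℕ), starMul s (t + u) = starMul s t + starMul s u) := by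
  refine ⟨fun s s' t _ _ _ h => ?_, starMul_add_right⟩
  rcases eq_or_ne s 0 with rfl | hs
  · rw [(regionOf_eq_zero_iff.1 (h.symm.trans regionOf_zero) : s' = 0)]
  have hs' : s' ≠ 0 := fun h' => hs (regionOf_eq_zero_iff.1 (h.trans (h' ▸ regionOf_zero)))
  rcases eq_or_ne t 0 with rfl | ht
  · simp [starMul]
  refine regionOf_eq_of_supportFn_eq (starMul_ne_zero hs ht) (starMul_ne_zero hs' ht)
    fun a b ha hb => ?_
  rw [supportFn_starMul s t hb, supportFn_starMul s' t hb]
  refine congrArg Multiset.sum (Multiset.map_congr rfl fun q _ => ?_)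
  exact supportFn_eq_of_regionOf_eq h (le_min (by positivity) (by positivity)) (by positivity)
end

section
/- Let 𝔞 ⊆ 𝔟 be ideals in a commutative ring R with 𝔞 ⊆ 𝔟 and suppose every element of 𝔟 is integral over 𝔞 (i.e., 𝔟 is contained in the integral closure of 𝔞). Then for every n ≥ 1, every element of 𝔟^n is integral over 𝔞^n; that is, integral closure of ideals is compatible with powers: 𝔟^n ⊆ integral closure of 𝔞^n. -/
open Finset

/-- `x` is integral over the ideal `I`: it satisfies an equation
`x^m + a_1 x^(m-1) + ⋯ + a_m = 0` with `a_i ∈ I^i`. -/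
def IsIntegralOverIdeal {R : Type} [CommRing R] (I : Ideal R) (x : R) : Prop :=
  ∃ (m : ℕ) (a : ℕ → R), 0 < m ∧ (∀ i, 1 ≤ i → i ≤ m → a i ∈ I ^ i) ∧
    x ^ m + ∑ i ∈ Finset.Icc 1 m, a i * x ^ (m - i) = 0

/-!
An element `x` is integral over `I ^ k` iff `x tᵏ` is integral over the Rees algebra
`R[It] ⊆ R[t]`: multiplying an equation `xᵐ + ∑ aᵢ xᵐ⁻ⁱ = 0` with `aᵢ ∈ I ^ (k i)` by `tᵏᵐ`
gives a monic equation for `x tᵏ` over `R[It]`, and conversely the coefficient of `tᵏᵐ` in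
`p (x tᵏ) = 0`, for `p` monic of degree `m`, is an equation for `x` over `I ^ k`. Since the
elements of `R[t]` integral over `R[It]` form a ring, the `x` with `x tᵏ` integral form ideals
`T k` with `T a * T b ≤ T (a + b)`; hence `J ≤ T 1` gives `J ^ n ≤ T n`.
-/

open Polynomial

theorem IsIntegral.of_pow_add_sum_eq_zero {A B : Type*} [CommRing A] [Ring B] [Algebra A B]
    {y : B} {m : ℕ} (c : ℕ → A)
    (hy : y ^ m + ∑ i ∈ Icc 1 m, algebraMap A B (c i) * y ^ (m - i) = 0) : IsIntegral A y := by
  refine ⟨X ^ m + ∑ i ∈ Icc 1 m, C (c i) * X ^ (m - i), monic_X_pow_add ?_, ?_⟩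
  · refine (degree_sum_le _ _).trans_lt ((Finset.sup_lt_iff (WithBot.bot_lt_coe m)).2 ?_)
    intro i hi
    have hi := mem_Icc.1 hi
    exact (degree_C_mul_X_pow_le _ _).trans_lt
      (WithBot.coe_lt_coe.2 (Nat.sub_lt_of_pos_le hi.1 hi.2))
  · simpa [eval₂_finsetSum] using hy

theorem Polynomial.Monic.coeff_aeval_monomial {R S : Type*} [CommSemiring R] [CommSemiring S]
    [Algebra S R[X]] {p : S[X]} (hp : p.Monic) (k : ℕ) (x : R) :
    (aeval (monomial k x) p).coeff (k * p.natDegree) = x ^ p.natDegree +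
      ∑ j ∈ Icc 1 p.natDegree,
        (algebraMap S R[X] (p.coeff (p.natDegree - j))).coeff (k * j) * x ^ (p.natDegree - j) := by
  set M := p.natDegree
  have hterm : ∀ j ∈ range (M + 1),
      (p.coeff (M - j) • monomial k x ^ (M - j)).coeff (k * M) =
        (algebraMap S R[X] (p.coeff (M - j))).coeff (k * j) * x ^ (M - j) := by
    intro j hj
    have hkM : k * M = k * j + k * (M - j) := by
      rw [← mul_add, Nat.add_sub_cancel' (Nat.lt_succ_iff.1 (mem_range.1 hj))]
    rw [Algebra.smul_def, monomial_pow, hkM, coeff_mul_monomial]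
  rw [aeval_eq_sum_range, ← sum_range_reflect, finsetSum_coeff]
  simp only [add_tsub_cancel_right]
  rw [sum_congr rfl hterm, Nat.range_succ_eq_Icc_zero, ← add_sum_Ioc_eq_sum_Icc (Nat.zero_le M),
    ← Icc_add_one_left_eq_Ioc, zero_add, Nat.sub_zero, mul_zero, hp.coeff_natDegree, map_one,
    coeff_one_zero, one_mul]

section ReesAlgebra

variable {R : Type} [CommRing R] {I : Ideal R} {k : ℕ} {x : R}

theorem isIntegralOverIdeal_iff :
    IsIntegralOverIdeal I x ↔ ∃ (m : ℕ) (a : ℕ → R), 0 < m ∧ (∀ i, a i ∈ I ^ i) ∧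
      x ^ m + ∑ i ∈ Icc 1 m, a i * x ^ (m - i) = 0 := by
  classical
  refine ⟨fun ⟨m, a, hm, ha, hx⟩ => ?_,
    fun ⟨m, a, hm, ha, hx⟩ => ⟨m, a, hm, fun i _ _ => ha i, hx⟩⟩
  refine ⟨m, fun i => if 1 ≤ i ∧ i ≤ m then a i else 0, hm, fun i => ?_, ?_⟩
  · dsimp only
    split_ifs with hi
    exacts [ha i hi.1 hi.2, zero_mem _]
  · convert hx using 2
    refine sum_congr rfl fun i hi => ?_
    simp only [if_pos (mem_Icc.1 hi)]

theorem isIntegral_monomial_of_isIntegralOverIdeal_pow (hx : IsIntegralOverIdeal (I ^ k) x) :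
    IsIntegral (reesAlgebra I) (monomial k x) := by
  obtain ⟨m, a, -, ha, hx⟩ := isIntegralOverIdeal_iff.1 hx
  let c : ℕ → reesAlgebra I := fun i =>
    ⟨monomial (k * i) (a i), reesAlgebra.monomial_mem.2 (by rw [pow_mul]; exact ha i)⟩
  refine IsIntegral.of_pow_add_sum_eq_zero (m := m) c ?_
  have hterm : ∀ i ∈ Icc 1 m, algebraMap (reesAlgebra I) R[X] (c i) * monomial k x ^ (m - i) =
      monomial (k * m) (a i * x ^ (m - i)) := by
    intro i hi
    rw [monomial_pow, show algebraMap (reesAlgebra I) R[X] (c i) = monomial (k * i) (a i) from rfl,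
      monomial_mul_monomial, ← mul_add, Nat.add_sub_cancel' (mem_Icc.1 hi).2]
  rw [sum_congr rfl hterm, monomial_pow, ← map_sum, ← map_add, hx, map_zero]

theorem isIntegralOverIdeal_pow_of_isIntegral_monomial
    (hx : IsIntegral (reesAlgebra I) (monomial k x)) : IsIntegralOverIdeal (I ^ k) x := by
  rcases subsingleton_or_nontrivial R with hR | hR
  · exact ⟨1, 0, one_pos, fun _ _ _ => zero_mem _, Subsingleton.elim _ _⟩
  set p := minpoly (reesAlgebra I) (monomial k x)
  refine isIntegralOverIdeal_iff.2 ⟨p.natDegree,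
    fun j => (algebraMap (reesAlgebra I) R[X] (p.coeff (p.natDegree - j))).coeff (k * j),
    minpoly.natDegree_pos hx, fun j => ?_, ?_⟩
  · rw [← pow_mul]
    exact (mem_reesAlgebra_iff I _).1 (p.coeff _).2 _
  · rw [← (minpoly.monic hx).coeff_aeval_monomial, minpoly.aeval, coeff_zero]

noncomputable def integralMonomialIdeal (I : Ideal R) (k : ℕ) : Ideal R :=
  ((integralClosure (reesAlgebra I) R[X]).restrictScalars R).toSubmodule.comap (monomial k)

theorem mem_integralMonomialIdeal :
    x ∈ integralMonomialIdeal I k ↔ IsIntegral (reesAlgebra I) (monomial k x) :=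
  Iff.rfl

theorem mem_integralMonomialIdeal_iff :
    x ∈ integralMonomialIdeal I k ↔ IsIntegralOverIdeal (I ^ k) x :=
  ⟨isIntegralOverIdeal_pow_of_isIntegral_monomial, isIntegral_monomial_of_isIntegralOverIdeal_pow⟩

theorem integralMonomialIdeal_zero : integralMonomialIdeal I 0 = ⊤ :=
  eq_top_iff.2 fun x _ =>
    Subalgebra.algebraMap_mem ((integralClosure (reesAlgebra I) R[X]).restrictScalars R) x

theorem integralMonomialIdeal_mul_le (a b : ℕ) :
    integralMonomialIdeal I a * integralMonomialIdeal I b ≤ integralMonomialIdeal I (a + b) :=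
  Ideal.mul_le.2 fun x hx y hy => by
    rw [mem_integralMonomialIdeal, ← monomial_mul_monomial]
    exact hx.mul hy

theorem pow_le_integralMonomialIdeal {J : Ideal R} (hJ : J ≤ integralMonomialIdeal I 1) :
    ∀ n, J ^ n ≤ integralMonomialIdeal I n
  | 0 => by rw [pow_zero, integralMonomialIdeal_zero, Ideal.one_eq_top]
  | n + 1 => by
    rw [pow_succ]
    exact (Ideal.mul_mono (pow_le_integralMonomialIdeal hJ n) hJ).trans
      (integralMonomialIdeal_mul_le n 1)

end ReesAlgebra

theorem integral_closure_ideal_pow_general {R : Type} [CommRing R] (I J : Ideal R)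
    (h : ∀ x ∈ J, IsIntegralOverIdeal I x) (n : ℕ) :
    ∀ x ∈ J ^ n, IsIntegralOverIdeal (I ^ n) x := by
  have hJ : J ≤ integralMonomialIdeal I 1 := fun x hx => by
    rw [mem_integralMonomialIdeal_iff, pow_one]
    exact h x hx
  exact fun x hx => mem_integralMonomialIdeal_iff.1 (pow_le_integralMonomialIdeal hJ n hx)

/-- If `𝔞 ⊆ 𝔟` and every element of `𝔟` is integral over `𝔞`, then for every `n ≥ 1`
every element of `𝔟^n` is integral over `𝔞^n`: integral closure of ideals is
compatible with powers. -/
theorem integral_closure_ideal_pow {R : Type} [CommRing R] (I J : Ideal R)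
    (hIJ : I ≤ J) (h : ∀ x ∈ J, IsIntegralOverIdeal I x) (n : ℕ) (hn : 1 ≤ n) :
    ∀ x ∈ J ^ n, IsIntegralOverIdeal (I ^ n) x :=
  integral_closure_ideal_pow_general I J h n
end
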